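/- arXiv:2003.04943 — 8 statements merged into one kernel-verified Lean document; each statement's English description precedes it below -/
import Mathlib

section
/- Let P be an orthomodular poset of finite height. Then for all x, y ∈ P, x ≤ y if and only if x → y = {1}. -/
/-- An orthomodular poset: a bounded poset with an antitone involution `compl`
that is a complementation (⊤ is the LUB and ⊥ the GLB of `{x, compl x}`),
in which joins of orthogonal pairs exist, satisfying the orthomodular law. -/
structure OrthomodularPoset (P : Type*) [PartialOrder P] [BoundedOrder P] where
  compl : P → P
  antitone : ∀ x y : P, x ≤ y → compl y ≤ compl x
  involution : ∀ x : P, compl (compl x) = x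
  lub_compl : ∀ x : P, IsLUB {x, compl x} ⊤
  glb_compl : ∀ x : P, IsGLB {x, compl x} ⊥
  join_of_orth : ∀ x y : P, x ≤ compl y → ∃ j : P, IsLUB {x, y} j
  orthomodular : ∀ x y j k : P, x ≤ y → IsLUB {compl y, x} j →
    IsLUB {compl j, x} k → k = y

/-- A poset is of finite height if every chain is finite. -/
def FiniteHeight (P : Type*) [PartialOrder P] : Prop :=
  ∀ C : Set P, IsChain (· ≤ ·) C → C.Finite

/-- `Max A`: the set of maximal elements of `A`. -/
def maxElems {P : Type*} [PartialOrder P] (A : Set P) : Set P :=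
  {m | m ∈ A ∧ ∀ x ∈ A, m ≤ x → m = x}

/-- The implication operator: `x → y := {y ∨ m | m ∈ Max L(x', y')}`,
where `y ∨ m` is expressed via `IsLUB`. -/
def ompImpl {P : Type*} [PartialOrder P] [BoundedOrder P] (O : OrthomodularPoset P)
    (x y : P) : Set P :=
  {z | ∃ m ∈ maxElems (lowerBounds {O.compl x, O.compl y}), IsLUB {y, m} z}

/-! A maximal lower bound `m` of `{x', y'}` always exists by finite height, and `m ≤ y'`. If
`y ∨ m = 1`, the orthomodular law applied to `m ≤ y'` forces `m = y'`, so `y' ≤ x'`. Conversely,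
if `x ≤ y` then `y'` is the only maximal lower bound and `y ∨ y' = 1`. -/

section maxElems

variable {P : Type*} [PartialOrder P]

lemma FiniteHeight.exists_mem_maxElems (hfin : FiniteHeight P) {A : Set P} (hA : A.Nonempty) :
    ∃ m, m ∈ maxElems A := by
  obtain ⟨a, ha⟩ := hA
  obtain ⟨m, hm⟩ := zorn_le₀ A fun c hcA hc => by
    rcases c.eq_empty_or_nonempty with rfl | hne
    · exact ⟨a, ha, by simp⟩
    · obtain ⟨u, huc, hu⟩ := (hfin c hc).exists_maximalFor id c hne
      refine ⟨u, hcA huc, fun z hz => ?_⟩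
      rcases hc.total hz huc with h | h
      exacts [h, hu hz h]
  exact ⟨m, hm.1, fun z hz hle => le_antisymm hle (hm.2 hz hle)⟩

lemma maxElems_lowerBounds_pair_of_le {a b : P} (h : b ≤ a) :
    maxElems (lowerBounds {a, b}) = {b} := by
  have hb : b ∈ lowerBounds {a, b} := by rintro z (rfl | rfl); exacts [h, le_rfl]
  ext m
  refine ⟨fun hm => hm.2 b hb (hm.1 (by simp)), ?_⟩
  rintro rfl
  exact ⟨hb, fun z hz hle => le_antisymm hle (hz (by simp))⟩

end maxElems

namespace OrthomodularPoset

variable {P : Type*} [PartialOrder P] [BoundedOrder P] (O : OrthomodularPoset P)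

lemma compl_le_compl_iff {x y : P} : O.compl x ≤ O.compl y ↔ y ≤ x :=
  ⟨fun h => by simpa only [O.involution] using O.antitone _ _ h, O.antitone y x⟩

lemma compl_top : O.compl ⊤ = ⊥ :=
  le_antisymm ((O.glb_compl ⊤).2 fun z hz => by rcases hz with rfl | rfl <;> simp) bot_le

lemma eq_of_le_of_isLUB_compl_eq_top {a b : P} (hab : a ≤ b)
    (htop : IsLUB {O.compl b, a} ⊤) : a = b := by
  have hbot : IsLUB {O.compl ⊤, a} a := by
    rw [O.compl_top]
    exact ⟨by rintro z (rfl | rfl) <;> simp, fun z hz => hz (by simp)⟩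
  exact O.orthomodular a b ⊤ a hab htop hbot

lemma ompImpl_eq_top_of_le {x y : P} (hxy : x ≤ y) : ompImpl O x y = {⊤} := by
  ext z
  simp only [ompImpl, maxElems_lowerBounds_pair_of_le (O.antitone x y hxy), Set.mem_singleton_iff,
    exists_eq_left]
  exact ⟨fun hz => hz.unique (O.lub_compl y), fun hz => hz ▸ O.lub_compl y⟩

end OrthomodularPoset

/-- In an orthomodular poset of finite height, `x ≤ y` iff `x → y = {1}`. -/
theorem omp_le_iff_impl_eq_top {P : Type*} [PartialOrder P] [BoundedOrder P]
    (O : OrthomodularPoset P) (hfin : FiniteHeight P) (x y : P) :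
    x ≤ y ↔ ompImpl O x y = {⊤} := by
  refine ⟨O.ompImpl_eq_top_of_le, fun himp => ?_⟩
  obtain ⟨m, hm⟩ := hfin.exists_mem_maxElems
    (⟨⊥, fun _ _ => bot_le⟩ : (lowerBounds {O.compl x, O.compl y}).Nonempty)
  have hmy : m ≤ O.compl y := hm.1 (by simp)
  obtain ⟨j, hj⟩ := O.join_of_orth m y hmy
  have hj_top : j = ⊤ := by
    rw [Set.pair_comm] at hj
    have hj_mem : j ∈ ompImpl O x y := ⟨m, hm, hj⟩
    rwa [himp] at hj_mem
  have hm_eq : m = O.compl y :=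
    O.eq_of_le_of_isLUB_compl_eq_top hmy (by rwa [O.involution, Set.pair_comm, ← hj_top])
  rw [← O.compl_le_compl_iff, ← hm_eq]
  exact hm.1 (by simp)
end

section
/- Let P be an orthomodular poset of finite height and x, y ∈ P with x ⊥ y (i.e. x ≤ y'). Then the join (x ∨ y)' ∨ y exists and x → y = {(x ∨ y)' ∨ y}. -/
/-! By De Morgan, `(x ∨ y)'` is the greatest lower bound of `x'` and `y'`, so `Max L(x', y')`
consists of `(x ∨ y)'` alone and `x → y` is the single join `y ∨ (x ∨ y)'`. -/

theorem maxElems_eq_singleton_of_isGreatest {P : Type*} [PartialOrder P] {A : Set P} {a : P}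
    (h : IsGreatest A a) : maxElems A = {a} := by
  ext m
  refine ⟨fun hm => hm.2 a h.1 (h.2 hm.1), ?_⟩
  rintro rfl
  exact ⟨h.1, fun z hz hle => le_antisymm hle (h.2 hz)⟩

namespace OrthomodularPoset

variable {P : Type*} [PartialOrder P] [BoundedOrder P] (O : OrthomodularPoset P)

theorem le_compl_comm {a b : P} : a ≤ O.compl b ↔ b ≤ O.compl a :=
  ⟨fun h => by simpa only [O.involution] using O.antitone _ _ h,
    fun h => by simpa only [O.involution] using O.antitone _ _ h⟩

theorem isGLB_compl_pair_of_isLUB {x y j : P} (hj : IsLUB {x, y} j) :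
    IsGLB {O.compl x, O.compl y} (O.compl j) := by
  refine ⟨?_, fun m hm => ?_⟩
  · rintro z (rfl | rfl)
    exacts [O.antitone _ _ (hj.1 (by simp)), O.antitone _ _ (hj.1 (by simp))]
  · rw [O.le_compl_comm]
    apply hj.2
    rintro z (rfl | rfl)
    exacts [O.le_compl_comm.1 (hm (by simp)), O.le_compl_comm.1 (hm (by simp))]

theorem ompImpl_eq_singleton {x y m k : P} (hm : IsGLB {O.compl x, O.compl y} m)
    (hk : IsLUB {y, m} k) : ompImpl O x y = {k} := by
  ext z
  simp only [ompImpl, maxElems_eq_singleton_of_isGreatest hm, Set.mem_singleton_iff,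
    exists_eq_left, Set.mem_ofPred_eq]
  exact ⟨fun hz => hz.unique hk, fun hz => hz ▸ hk⟩

end OrthomodularPoset

theorem omp_impl_of_orth_general {P : Type*} [PartialOrder P] [BoundedOrder P]
    (O : OrthomodularPoset P) (x y : P)
    (hxy : x ≤ O.compl y) :
    ∃ j : P, IsLUB {x, y} j ∧ ∃ k : P, IsLUB {O.compl j, y} k ∧ ompImpl O x y = {k} := by
  obtain ⟨j, hj⟩ := O.join_of_orth x y hxy
  obtain ⟨k, hk⟩ := O.join_of_orth (O.compl j) y (O.antitone y j (hj.1 (by simp)))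
  refine ⟨j, hj, k, hk, O.ompImpl_eq_singleton (O.isGLB_compl_pair_of_isLUB hj) ?_⟩
  rwa [Set.pair_comm] at hk

/-- If `x ⊥ y` then the join `(x ∨ y)' ∨ y` exists and `x → y = {(x ∨ y)' ∨ y}`. -/
theorem omp_impl_of_orth {P : Type*} [PartialOrder P] [BoundedOrder P]
    (O : OrthomodularPoset P) (hfin : FiniteHeight P) (x y : P)
    (hxy : x ≤ O.compl y) :
    ∃ j : P, IsLUB {x, y} j ∧ ∃ k : P, IsLUB {O.compl j, y} k ∧ ompImpl O x y = {k} :=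
  omp_impl_of_orth_general O x y hxy
end

section
/- Let P be an orthomodular poset of finite height and x, y ∈ P with y ≤ x. Then the join x' ∨ y exists and x → y = {x' ∨ y}. -/
theorem lowerBounds_pair_of_le {P : Type*} [Preorder P] {a b : P} (hab : a ≤ b) :
    lowerBounds {a, b} = Set.Iic a := by
  rw [lowerBounds_insert, lowerBounds_singleton, Set.inter_eq_left]
  exact Set.Iic_subset_Iic.2 hab

theorem maxElems_Iic {P : Type*} [PartialOrder P] (a : P) : maxElems (Set.Iic a) = {a} := by
  ext m
  constructor
  · rintro ⟨hma, hmax⟩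
    exact hmax a le_rfl hma
  · rintro rfl
    exact ⟨le_rfl, fun _ hz hle => le_antisymm hle hz⟩

theorem ompImpl_eq_setOf_isLUB_of_le {P : Type*} [PartialOrder P] [BoundedOrder P]
    (O : OrthomodularPoset P) {x y : P} (hyx : y ≤ x) :
    ompImpl O x y = {z | IsLUB {O.compl x, y} z} := by
  rw [ompImpl, lowerBounds_pair_of_le (O.antitone _ _ hyx), maxElems_Iic]
  simp only [Set.mem_singleton_iff, exists_eq_left, Set.pair_comm]

theorem omp_impl_of_ge_general {P : Type*} [PartialOrder P] [BoundedOrder P]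
    (O : OrthomodularPoset P) (x y : P)
    (hyx : y ≤ x) :
    ∃ k : P, IsLUB {O.compl x, y} k ∧ ompImpl O x y = {k} := by
  obtain ⟨k, hk⟩ := O.join_of_orth _ _ (O.antitone _ _ hyx)
  refine ⟨k, hk, ?_⟩
  rw [ompImpl_eq_setOf_isLUB_of_le O hyx]
  ext z
  exact ⟨fun hz => hz.unique hk, fun hz => hz ▸ hk⟩

/-- If `y ≤ x` then the join `x' ∨ y` exists and `x → y = {x' ∨ y}`. -/
theorem omp_impl_of_ge {P : Type*} [PartialOrder P] [BoundedOrder P]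
    (O : OrthomodularPoset P) (hfin : FiniteHeight P) (x y : P)
    (hyx : y ≤ x) :
    ∃ k : P, IsLUB {O.compl x, y} k ∧ ompImpl O x y = {k} :=
  omp_impl_of_ge_general O x y hyx
end

section
/- Let P be an orthomodular poset of finite height and x, y ∈ P with x ≤ y. Then for every a ∈ y' → x, every b ∈ a → x, every c ∈ b' → x and every d ∈ c → x, one has d = y; in other words (((y' → x) → x)' → x) → x = y. -/
section Pair

variable {P : Type*} [PartialOrder P] {u v w z : P}

lemma mem_upperBounds_pair : w ∈ upperBounds {u, v} ↔ u ≤ w ∧ v ≤ w := by simp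

lemma mem_lowerBounds_pair : w ∈ lowerBounds {u, v} ↔ w ≤ u ∧ w ≤ v := by simp

lemma IsLUB.pair_left_le (h : IsLUB {u, v} w) : u ≤ w := h.1 (by simp)

lemma IsLUB.pair_right_le (h : IsLUB {u, v} w) : v ≤ w := h.1 (by simp)

lemma IsLUB.pair_le (h : IsLUB {u, v} w) (hu : u ≤ z) (hv : v ≤ z) : w ≤ z :=
  h.2 (mem_upperBounds_pair.2 ⟨hu, hv⟩)

lemma isLUB_bot_pair [OrderBot P] : IsLUB {⊥, u} u :=
  IsGreatest.isLUB ⟨by simp, by simp⟩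

end Pair

namespace OrthomodularPoset

variable {P : Type*} [PartialOrder P] [BoundedOrder P] (O : OrthomodularPoset P) {x y a b : P}

lemma compl_le_compl (h : x ≤ y) : O.compl y ≤ O.compl x := O.antitone x y h

lemma compl_le_of_compl_le (h : O.compl x ≤ y) : O.compl y ≤ x := by
  simpa only [O.involution] using O.compl_le_compl h

lemma eq_bot_of_le_of_le_compl (h : y ≤ x) (hc : y ≤ O.compl x) : y = ⊥ :=
  le_bot_iff.1 ((O.glb_compl x).2 (mem_lowerBounds_pair.2 ⟨h, hc⟩))

lemma exists_isLUB_compl_of_le (h : x ≤ y) : ∃ j, IsLUB {O.compl y, x} j :=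
  O.join_of_orth _ _ (O.compl_le_compl h)

lemma eq_of_isLUB_maxElems_lowerBounds {m : P} (hxy : x ≤ y)
    (hm : m ∈ maxElems (lowerBounds {y, O.compl x})) (hma : IsLUB {x, m} a) : a = y := by
  obtain ⟨hmL, hmMax⟩ := hm
  obtain ⟨hmy, hmx⟩ := mem_lowerBounds_pair.1 hmL
  have hay : a ≤ y := hma.pair_le hxy hmy
  obtain ⟨s, hs⟩ := O.exists_isLUB_compl_of_le hay
  have has : a ≤ s := hs.pair_right_le
  obtain ⟨k, hk⟩ := O.exists_isLUB_compl_of_le has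
  have hky : k = y := O.orthomodular a y s k hay hs hk
  have hsy : O.compl s ≤ y := O.compl_le_of_compl_le hs.pair_left_le
  have hsx : O.compl s ≤ O.compl x := O.compl_le_compl (hma.pair_left_le.trans has)
  obtain ⟨t, ht⟩ := O.exists_isLUB_compl_of_le (hma.pair_right_le.trans has)
  have hmt : m = t :=
    hmMax t (mem_lowerBounds_pair.2 ⟨ht.pair_le hsy hmy, ht.pair_le hsx hmx⟩) ht.pair_right_le
  have hs_bot : O.compl s = ⊥ :=
    O.eq_bot_of_le_of_le_compl ((hmt ▸ ht.pair_left_le).trans hma.pair_right_le)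
      (O.compl_le_compl has)
  have hka : k = a := hk.unique (hs_bot ▸ isLUB_bot_pair)
  exact hka.symm.trans hky

lemma eq_of_mem_ompImpl_compl (hxy : x ≤ y) (ha : a ∈ ompImpl O (O.compl y) x) : a = y := by
  obtain ⟨m, hm, hma⟩ := ha
  rw [O.involution] at hm
  exact O.eq_of_isLUB_maxElems_lowerBounds hxy hm hma

lemma isLUB_of_mem_ompImpl (hxa : x ≤ a) (hb : b ∈ ompImpl O a x) :
    IsLUB {O.compl a, x} b := by
  obtain ⟨n, hn, hnb⟩ := hb
  have hna : n = O.compl a :=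
    hn.2 _ (mem_lowerBounds_pair.2 ⟨le_rfl, O.compl_le_compl hxa⟩)
      (mem_lowerBounds_pair.1 hn.1).1
  rwa [hna, Set.pair_comm] at hnb

end OrthomodularPoset

theorem omp_orthomodular_impl_general {P : Type*} [PartialOrder P] [BoundedOrder P]
    (O : OrthomodularPoset P) (x y : P)
    (hxy : x ≤ y) :
    ∀ a ∈ ompImpl O (O.compl y) x, ∀ b ∈ ompImpl O a x,
      ∀ c ∈ ompImpl O (O.compl b) x, ∀ d ∈ ompImpl O c x, d = y := by
  intro a ha b hb c hc d hd
  have hay : a = y := O.eq_of_mem_ompImpl_compl hxy ha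
  have hb' : IsLUB {O.compl y, x} b := O.isLUB_of_mem_ompImpl hxy (hay ▸ hb)
  have hxb : x ≤ b := hb'.pair_right_le
  have hcb : c = b := O.eq_of_mem_ompImpl_compl hxb hc
  have hd' : IsLUB {O.compl b, x} d := O.isLUB_of_mem_ompImpl hxb (hcb ▸ hd)
  exact O.orthomodular x y b d hxy hb' hd'

/-- If `x ≤ y` then `(((y' → x) → x)' → x) → x = y`. -/
theorem omp_orthomodular_impl {P : Type*} [PartialOrder P] [BoundedOrder P]
    (O : OrthomodularPoset P) (hfin : FiniteHeight P) (x y : P)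
    (hxy : x ≤ y) :
    ∀ a ∈ ompImpl O (O.compl y) x, ∀ b ∈ ompImpl O a x,
      ∀ c ∈ ompImpl O (O.compl b) x, ∀ d ∈ ompImpl O c x, d = y :=
  omp_orthomodular_impl_general O x y hxy
end

section
/- Let P be an orthomodular poset of finite height. Then for every x ∈ P and every a ∈ x' → x, one has a → x = {1}; in other words (x' → x) → x = 1. -/
/-! `x' → x = {x}`, because the only maximal lower bound of `{x, x'}` is `0` and `x ∨ 0 = x`;
and `x → x = {1}`, because the only maximal lower bound of `{x', x'}` is `x'` and `x ∨ x' = 1`. -/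

section Bounds

variable {P : Type*} [PartialOrder P]

lemma maxElems_lowerBounds_of_isGLB {s : Set P} {g : P} (h : IsGLB s g) :
    maxElems (lowerBounds s) = {g} := by
  ext m
  constructor
  · rintro ⟨hm, hmax⟩
    exact hmax g h.1 (h.2 hm)
  · rintro rfl
    exact ⟨h.1, fun y hy hle => le_antisymm hle (h.2 hy)⟩

lemma setOf_isLUB_eq_singleton {s : Set P} {j : P} (h : IsLUB s j) : {z | IsLUB s z} = {j} :=
  Set.ext fun _ => ⟨fun hz => hz.unique h, fun hz => hz ▸ h⟩

lemma isLUB_pair_bot [OrderBot P] (x : P) : IsLUB {x, ⊥} x :=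
  ⟨by rintro _ (rfl | rfl) <;> simp, fun _ h => h (Set.mem_insert x _)⟩

end Bounds

section Implication

variable {P : Type*} [PartialOrder P] [BoundedOrder P] (O : OrthomodularPoset P)

lemma ompImpl_eq_of_isGLB {x y g : P} (h : IsGLB {O.compl x, O.compl y} g) :
    ompImpl O x y = {z | IsLUB {y, g} z} := by
  simp only [ompImpl, maxElems_lowerBounds_of_isGLB h, Set.mem_singleton_iff, exists_eq_left]

lemma ompImpl_compl_self (x : P) : ompImpl O (O.compl x) x = {x} := by
  rw [ompImpl_eq_of_isGLB O (g := ⊥) (by rw [O.involution]; exact O.glb_compl x)]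
  exact setOf_isLUB_eq_singleton (isLUB_pair_bot x)

lemma ompImpl_self (x : P) : ompImpl O x x = {⊤} := by
  rw [ompImpl_eq_of_isGLB O (g := O.compl x) (by rw [Set.pair_eq_singleton]; exact isGLB_singleton)]
  exact setOf_isLUB_eq_singleton (O.lub_compl x)

end Implication

theorem omp_compl_impl_self_impl_general {P : Type*} [PartialOrder P] [BoundedOrder P]
    (O : OrthomodularPoset P) (x : P) :
    ∀ a ∈ ompImpl O (O.compl x) x, ompImpl O a x = {⊤} := by
  intro a ha
  rw [ompImpl_compl_self, Set.mem_singleton_iff] at ha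
  rw [ha, ompImpl_self]

/-- `(x' → x) → x = 1`: for every `a ∈ x' → x`, one has `a → x = {1}`. -/
theorem omp_compl_impl_self_impl {P : Type*} [PartialOrder P] [BoundedOrder P]
    (O : OrthomodularPoset P) (hfin : FiniteHeight P) (x : P) :
    ∀ a ∈ ompImpl O (O.compl x) x, ompImpl O a x = {⊤} :=
  omp_compl_impl_self_impl_general O x
end

section
/- Let P be an orthomodular poset of finite height. Then for all x, y ∈ P, the set x → y is nonempty, i.e. the implication operator is everywhere defined. -/
theorem IsChain.exists_isGreatest_of_finite {P : Type*} [PartialOrder P] {c : Set P}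
    (hc : IsChain (· ≤ ·) c) (hfin : c.Finite) (hne : c.Nonempty) : ∃ u, IsGreatest c u := by
  obtain ⟨u, hu⟩ := hfin.exists_maximal hne
  exact ⟨u, hu.1, fun w hw => (hc.total hw hu.1).elim id (hu.2 hw)⟩

theorem mem_maxElems_iff_maximal {P : Type*} [PartialOrder P] {A : Set P} {m : P} :
    m ∈ maxElems A ↔ Maximal (· ∈ A) m :=
  ⟨fun hm => ⟨hm.1, fun _ hw hmw => (hm.2 _ hw hmw).ge⟩,
    fun hm => ⟨hm.1, fun _ hw hmw => le_antisymm hmw (hm.2 hw hmw)⟩⟩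

namespace FiniteHeight

variable {P : Type*} [PartialOrder P]

theorem exists_maximal (h : FiniteHeight P) {A : Set P} (hA : A.Nonempty) :
    ∃ m, Maximal (· ∈ A) m := by
  obtain ⟨a, ha⟩ := hA
  obtain ⟨m, -, hm⟩ := zorn_le_nonempty₀ A (fun c hcA hc b hb => by
    obtain ⟨u, hu⟩ := hc.exists_isGreatest_of_finite (h c hc) ⟨b, hb⟩
    exact ⟨u, hcA hu.1, hu.2⟩) a ha
  exact ⟨m, hm⟩

theorem maxElems_nonempty (h : FiniteHeight P) {A : Set P} (hA : A.Nonempty) :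
    (maxElems A).Nonempty :=
  let ⟨m, hm⟩ := h.exists_maximal hA
  ⟨m, mem_maxElems_iff_maximal.2 hm⟩

end FiniteHeight

theorem OrthomodularPoset.le_compl_comm_s12 {P : Type*} [PartialOrder P] [BoundedOrder P]
    (O : OrthomodularPoset P) {a b : P} (h : a ≤ O.compl b) : b ≤ O.compl a := by
  simpa only [O.involution] using O.antitone _ _ h

/-- In an orthomodular poset of finite height the implication is everywhere
defined: `x → y` is nonempty for all `x, y`. -/
theorem omp_impl_nonempty {P : Type*} [PartialOrder P] [BoundedOrder P]
    (O : OrthomodularPoset P) (hfin : FiniteHeight P) (x y : P) :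
    (ompImpl O x y).Nonempty := by
  have hbot : (⊥ : P) ∈ lowerBounds {O.compl x, O.compl y} := fun _ _ => bot_le
  obtain ⟨m, hm⟩ := hfin.maxElems_nonempty ⟨⊥, hbot⟩
  have hmy : m ≤ O.compl y := hm.1 (Set.mem_insert_of_mem _ rfl)
  obtain ⟨j, hj⟩ := O.join_of_orth y m (O.le_compl_comm_s12 hmy)
  exact ⟨j, m, hm, hj⟩
end

section
/- Let I be a set with a distinguished element 0 and let f : I × I → (nonempty subsets of I) be a map such that for every a ∈ I the set ⋃_{b ∈ f(a,0)} f(b,0) equals the singleton {a} (the involution axiom x'' ≈ x interpreted setwise, where x' abbreviates x → 0). Then for every a ∈ I the set f(a,0) is a singleton. -/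
theorem Set.eq_singleton_of_biUnion_eq_singleton {α β : Type*} {s : Set α} {g : α → Set β}
    {a : β} {b : α} (h : ⋃ x ∈ s, g x = {a}) (hb : b ∈ s) (hne : (g b).Nonempty) :
    g b = {a} :=
  hne.subset_singleton_iff.mp (h ▸ subset_biUnion_of_mem (u := g) hb)

/-- Lemma 2: in an implication orthomodular poset, `a' = a → 0` is a singleton.
Only the (setwise) involution axiom `x'' ≈ x` is needed: if
`⋃ b ∈ f a 0, f b 0 = {a}` for every `a`, then every `f a 0` is a singleton. -/
theorem impl_zero_singleton {I : Type*} (z : I) (f : I → I → Set I)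
    (hne : ∀ a b : I, (f a b).Nonempty)
    (hinv : ∀ a : I, (⋃ b ∈ f a z, f b z) = {a}) :
    ∀ a : I, ∃ b : I, f a z = {b} := by
  intro a
  obtain ⟨b, hb⟩ := hne a z
  have hfb : f b z = {a} :=
    Set.eq_singleton_of_biUnion_eq_singleton (g := (f · z)) (hinv a) hb (hne b z)
  refine ⟨b, ?_⟩
  simpa only [hfb, Set.biUnion_singleton] using hinv b
end

section
/- Let P be an orthomodular poset of finite height. Then the implication operator satisfies condition (C): for all x, y ∈ P, x → y = { v | there exists u ∈ P with u ≤ x', u ≤ y', u maximal with these properties (i.e. for all w, if u ≤ w, w ≤ x' and w ≤ y' then u = w), and v ∈ a → u for some a ∈ y → u }; equivalently, x → y equals the set of all elements of the form (y → u) → u where u ranges over Max L(x', y'). -/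
/-!
For `u ≤ y'` the inner implication `y → u` is the singleton `{y'}`: the maximal lower bounds of
`y'` and `u'` reduce to the single element `(y ∨ u)'`, and the orthomodular law gives
`u ∨ (y ∨ u)' = y'`. Likewise `y' → u = {u ∨ y}`, since `y` is the greatest lower bound of `y`
and `u'`. Hence `(y → u) → u = {y ∨ u}` for every `u ∈ Max L(x', y')`, which is exactly `x → y`.
-/

section MaxElems

variable {P : Type*} [PartialOrder P]

theorem mem_lowerBounds_pair_s17 {a b c : P} : c ∈ lowerBounds ({a, b} : Set P) ↔ c ≤ a ∧ c ≤ b := by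
  simp [lowerBounds_insert]

theorem mem_upperBounds_pair_s17 {a b c : P} : c ∈ upperBounds ({a, b} : Set P) ↔ a ≤ c ∧ b ≤ c := by
  simp [upperBounds_insert]

theorem maxElems_eq_singleton {A : Set P} {g : P} (hg : IsGreatest A g) : maxElems A = {g} := by
  ext m
  constructor
  · rintro ⟨hm, hmax⟩
    exact hmax g hg.1 (hg.2 hm)
  · rintro rfl
    exact ⟨hg.1, fun x hx hmx => le_antisymm hmx (hg.2 hx)⟩

theorem isGreatest_lowerBounds_pair_of_le {a b : P} (h : a ≤ b) :
    IsGreatest (lowerBounds {a, b}) a :=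
  ⟨mem_lowerBounds_pair_s17.2 ⟨le_rfl, h⟩, fun _ hc => (mem_lowerBounds_pair_s17.1 hc).1⟩

theorem mem_maxElems_lowerBounds_pair {a b u : P} :
    u ∈ maxElems (lowerBounds {a, b}) ↔
      u ≤ a ∧ u ≤ b ∧ ∀ w, u ≤ w → w ≤ a → w ≤ b → u = w := by
  simp only [maxElems, Set.mem_ofPred_eq, mem_lowerBounds_pair_s17]
  exact ⟨fun ⟨⟨ha, hb⟩, hmax⟩ => ⟨ha, hb, fun w huw hwa hwb => hmax w ⟨hwa, hwb⟩ huw⟩,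
    fun ⟨ha, hb, hmax⟩ => ⟨⟨ha, hb⟩, fun w ⟨hwa, hwb⟩ huw => hmax w huw hwa hwb⟩⟩

end MaxElems

namespace OrthomodularPoset

variable {P : Type*} [PartialOrder P] [BoundedOrder P] (O : OrthomodularPoset P)

theorem compl_le_compl_s17 {a b : P} (h : a ≤ b) : O.compl b ≤ O.compl a :=
  O.antitone a b h

theorem isGreatest_lowerBounds_compl_of_isLUB {a b z : P} (hz : IsLUB {a, b} z) :
    IsGreatest (lowerBounds {O.compl a, O.compl b}) (O.compl z) := by
  have ⟨haz, hbz⟩ := mem_upperBounds_pair_s17.1 hz.1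
  refine ⟨mem_lowerBounds_pair_s17.2 ⟨O.compl_le_compl_s17 haz, O.compl_le_compl_s17 hbz⟩, fun w hw => ?_⟩
  have ⟨hwa, hwb⟩ := mem_lowerBounds_pair_s17.1 hw
  exact O.le_compl_comm.1 (hz.2 (mem_upperBounds_pair_s17.2
    ⟨O.le_compl_comm.1 hwa, O.le_compl_comm.1 hwb⟩))

/-- With `c := q' ∨ u`, maximality forces `n = c'`; the orthomodular law then gives
`u ∨ c' = q`. -/
theorem isLUB_of_mem_maxElems {u q n : P} (huq : u ≤ q)
    (hn : n ∈ maxElems (lowerBounds {q, O.compl u})) : IsLUB {u, n} q := by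
  obtain ⟨c, hc⟩ := O.join_of_orth (O.compl q) u (O.compl_le_compl_s17 huq)
  have hc_greatest := O.isGreatest_lowerBounds_compl_of_isLUB hc
  rw [O.involution] at hc_greatest
  obtain rfl : n = O.compl c := by
    rw [maxElems_eq_singleton hc_greatest] at hn
    exact hn
  obtain ⟨k, hk⟩ := O.join_of_orth (O.compl c) u (mem_lowerBounds_pair_s17.1 hc_greatest.1).2
  obtain rfl : k = q := O.orthomodular u q c k huq hc hk
  rwa [Set.pair_comm]

theorem ompImpl_eq_singleton_compl {y u : P} (hu : u ≤ O.compl y) :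
    ompImpl O y u = {O.compl y} := by
  obtain ⟨z, hz⟩ := O.join_of_orth y u (O.le_compl_comm.1 hu)
  have hmax := maxElems_eq_singleton (O.isGreatest_lowerBounds_compl_of_isLUB hz)
  have hjoin : IsLUB {u, O.compl z} (O.compl y) := O.isLUB_of_mem_maxElems hu (hmax ▸ rfl)
  ext a
  simp only [ompImpl, hmax, Set.mem_singleton_iff, exists_eq_left, Set.mem_ofPred_eq]
  exact ⟨fun ha => ha.unique hjoin, fun ha => ha ▸ hjoin⟩

theorem ompImpl_compl_eq {y u : P} (hu : u ≤ O.compl y) :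
    ompImpl O (O.compl y) u = {z | IsLUB {y, u} z} := by
  have hmax := maxElems_eq_singleton
    (isGreatest_lowerBounds_pair_of_le (O.le_compl_comm.1 hu))
  ext z
  simp only [ompImpl, O.involution, hmax, Set.mem_singleton_iff, exists_eq_left,
    Set.mem_ofPred_eq]
  rw [Set.pair_comm]

end OrthomodularPoset

theorem omp_condition_C_general {P : Type*} [PartialOrder P] [BoundedOrder P]
    (O : OrthomodularPoset P) (x y : P) :
    ompImpl O x y =
      {v : P | ∃ u : P, u ≤ O.compl x ∧ u ≤ O.compl y ∧
        (∀ w : P, u ≤ w → w ≤ O.compl x → w ≤ O.compl y → u = w) ∧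
        ∃ a ∈ ompImpl O y u, v ∈ ompImpl O a u} := by
  ext z
  simp only [Set.mem_ofPred_eq]
  constructor
  · rintro ⟨u, hu, hz⟩
    obtain ⟨hux, huy, humax⟩ := mem_maxElems_lowerBounds_pair.1 hu
    refine ⟨u, hux, huy, humax, O.compl y, by rw [O.ompImpl_eq_singleton_compl huy]; rfl, ?_⟩
    rwa [O.ompImpl_compl_eq huy]
  · rintro ⟨u, hux, huy, humax, a, ha, hz⟩
    rw [O.ompImpl_eq_singleton_compl huy, Set.mem_singleton_iff] at ha
    rw [ha, O.ompImpl_compl_eq huy] at hz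
    exact ⟨u, mem_maxElems_lowerBounds_pair.2 ⟨hux, huy, humax⟩, hz⟩

/-- The assigned implication operator satisfies condition (C):
`x → y` equals the set of all elements of `(y → u) → u` where `u` ranges over
the maximal common lower bounds of `x'` and `y'`. -/
theorem omp_condition_C {P : Type*} [PartialOrder P] [BoundedOrder P]
    (O : OrthomodularPoset P) (hfin : FiniteHeight P) (x y : P) :
    ompImpl O x y =
      {v : P | ∃ u : P, u ≤ O.compl x ∧ u ≤ O.compl y ∧
        (∀ w : P, u ≤ w → w ≤ O.compl x → w ≤ O.compl y → u = w) ∧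
        ∃ a ∈ ompImpl O y u, v ∈ ompImpl O a u} :=
  omp_condition_C_general O x y
end
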